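/- Let g_r satisfy g_r = 1 + X*g_r^r (r ≥ 1). Then the compositional inverse of X*g_r(X)^r is X/(1+X)^r; equivalently, substituting X/(1+X)^r for X in X*g_r(X)^r gives X. -/

import Mathlib

open PowerSeries

/-- Composition (substitution) of formal power series: `comp f g = f(g)`,
well-defined when `g` has zero constant coefficient. -/
noncomputable def comp (f g : PowerSeries ℚ) : PowerSeries ℚ :=
  PowerSeries.mk fun n =>
    coeff n (∑ k ∈ Finset.range (n + 1), (coeff k f) • g ^ k)

namespace StmtAux

/-- Evaluation of a polynomial at a power series, as a ring hom. -/
noncomputable def E (u : PowerSeries ℚ) : Polynomial ℚ →+* PowerSeries ℚ :=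
  Polynomial.eval₂RingHom C u

lemma coeff_pow_eq_zero {u : PowerSeries ℚ} (hu : X ∣ u) {n k : ℕ} (h : n < k) :
    coeff n (u ^ k) = 0 :=
  (X_pow_dvd_iff.mp (pow_dvd_pow_of_dvd hu k)) n h

lemma coeff_E_eq_zero {u : PowerSeries ℚ} (hu : X ∣ u) {n : ℕ} {P : Polynomial ℚ}
    (hP : ∀ k ≤ n, P.coeff k = 0) : coeff n (E u P) = 0 := by
  rw [E, Polynomial.coe_eval₂RingHom, Polynomial.eval₂_eq_sum, Polynomial.sum, map_sum]
  apply Finset.sum_eq_zero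
  intro k _
  rcases le_or_gt k n with h | h
  · rw [hP k h]; simp
  · rw [coeff_C_mul, coeff_pow_eq_zero hu h, mul_zero]

lemma coeff_comp_trunc {u : PowerSeries ℚ} (hu : X ∣ u) {n m : ℕ} (h : n < m)
    (f : PowerSeries ℚ) :
    coeff n (comp f u) = coeff n (E u (trunc m f)) := by
  have base : coeff n (comp f u) = coeff n (E u (trunc (n + 1) f)) := by
    rw [comp, coeff_mk, E, Polynomial.coe_eval₂RingHom, eval₂_trunc_eq_sum_range]
    congr 1
    exact Finset.sum_congr rfl fun k _ => by rw [smul_eq_C_mul]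
  have hz : coeff n (E u (trunc m f - trunc (n + 1) f)) = 0 := by
    apply coeff_E_eq_zero hu
    intro k hk
    rw [Polynomial.coeff_sub, coeff_trunc, coeff_trunc, if_pos (lt_of_le_of_lt hk h),
      if_pos (Nat.lt_succ_of_le hk), sub_self]
  rw [map_sub, map_sub] at hz
  linarith

lemma comp_add (f g u : PowerSeries ℚ) : comp (f + g) u = comp f u + comp g u := by
  ext n
  simp [comp, add_smul, Finset.sum_add_distrib]

lemma comp_one (u : PowerSeries ℚ) : comp 1 u = 1 := by
  ext n
  rw [comp, coeff_mk]
  rw [Finset.sum_eq_single 0]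
  · simp
  · intro k _ hk
    rw [coeff_one, if_neg hk, zero_smul]
  · intro h
    exact absurd (Finset.mem_range.mpr (Nat.succ_pos n)) h

lemma comp_X {u : PowerSeries ℚ} (hu : X ∣ u) : comp X u = u := by
  ext n
  rw [coeff_comp_trunc hu (show n < n + 2 by omega) X, trunc_X, E,
    Polynomial.coe_eval₂RingHom, Polynomial.eval₂_X]

lemma comp_mul {u : PowerSeries ℚ} (hu : X ∣ u) (f g : PowerSeries ℚ) :
    comp (f * g) u = comp f u * comp g u := by
  ext n
  rw [coeff_comp_trunc hu n.lt_succ_self]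
  have key : coeff n (E u (trunc (n + 1) (f * g))) =
      coeff n (E u (trunc (n + 1) f * trunc (n + 1) g)) := by
    have hz : coeff n (E u (trunc (n + 1) (f * g) - trunc (n + 1) f * trunc (n + 1) g)) = 0 := by
      apply coeff_E_eq_zero hu
      intro k hk
      rw [Polynomial.coeff_sub]
      have h1 : (trunc (n + 1) (f * g)).coeff k = coeff k (f * g) := by
        rw [coeff_trunc, if_pos (Nat.lt_succ_of_le hk)]
      have h2 : (trunc (n + 1) f * trunc (n + 1) g).coeff k = coeff k (f * g) := by
        rw [← Polynomial.coeff_coe, Polynomial.coe_mul,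
          ← coeff_mul_eq_coeff_trunc_mul_trunc f g (Nat.lt_succ_of_le hk)]
      rw [h1, h2, sub_self]
    rw [map_sub, map_sub] at hz
    linarith
  rw [key, map_mul, coeff_mul, coeff_mul]
  apply Finset.sum_congr rfl
  intro p hp
  replace hp : p.1 + p.2 = n := Finset.HasAntidiagonal.mem_antidiagonal.mp hp
  have h1 : p.1 < n + 1 := by omega
  have h2 : p.2 < n + 1 := by omega
  rw [coeff_comp_trunc hu h1 f, coeff_comp_trunc hu h2 g]

lemma comp_pow {u : PowerSeries ℚ} (hu : X ∣ u) (f : PowerSeries ℚ) (k : ℕ) :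
    comp (f ^ k) u = (comp f u) ^ k := by
  induction k with
  | zero => simpa using comp_one u
  | succ k ih => rw [pow_succ, comp_mul hu, ih, pow_succ]

end StmtAux

open StmtAux in
theorem stmt_4 (r : ℕ) (hr : 1 ≤ r) (g : PowerSeries ℚ)
    (hg : g = 1 + X * g ^ r) :
    comp (X * g ^ r) (X * ((1 + X) ^ r)⁻¹) = X := by
  set u : PowerSeries ℚ := X * ((1 + X) ^ r)⁻¹ with hu_def
  have hu : X ∣ u := ⟨_, rfl⟩
  have hcc : constantCoeff ((1 + X : PowerSeries ℚ) ^ r) ≠ 0 := by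
    simp
  have hux : u * (1 + X) ^ r = X := by
    rw [hu_def, mul_assoc, PowerSeries.inv_mul_cancel _ hcc, mul_one]
  set H := comp g u with hH
  have hHeq : H = 1 + u * H ^ r := by
    conv_lhs => rw [hH, hg]
    rw [comp_add, comp_one, comp_mul hu, comp_X hu, comp_pow hu]
  obtain ⟨c, hc⟩ := sub_dvd_pow_sub_pow H (1 + X) r
  have hfactor : (1 - u * c) * (H - (1 + X)) = 0 := by
    linear_combination hHeq + u * hc + hux
  have hnz : (1 - u * c : PowerSeries ℚ) ≠ 0 := by
    intro h
    have := congrArg (constantCoeff) h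
    simp [hu_def] at this
  have hH1X : H = 1 + X := by
    rcases mul_eq_zero.mp hfactor with h | h
    · exact absurd h hnz
    · exact sub_eq_zero.mp h
  rw [comp_mul hu, comp_X hu, comp_pow hu, ← hH, hH1X, hux]
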